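/- arXiv:1012.0705 — 3 statements merged into one kernel-verified Lean document; each statement's English description precedes it below -/
import Mathlib

section
/- Let H be a self-adjoint operator on a complex Hilbert space with spectral measure E, and let I' be an interval. If for some s ≥ 0 and injective bounded self-adjoint C the reduced limiting absorption principle sup over Re z ∈ I', Im z ≠ 0 of ‖C (H - z)⁻¹ P⊥ C‖ < ∞ holds (P⊥ the projection onto the continuous spectral subspace), then for every special sequence (f_n, z_n) for H associated to (I', C) — i.e. Re z_n ∈ I', Im z_n ≠ 0, Im z_n → 0, f_n = P⊥ f_n, (H - z_n) f_n ∈ D(C⁻¹), ‖C⁻¹ (H - z_n) f_n‖ → 0, ‖C f_n‖ → η — the mass η is zero. -/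
open scoped InnerProductSpace Topology

/-- If the reduced limiting absorption principle
`sup_{Re z ∈ I', Im z ≠ 0} ‖C (H - z)⁻¹ P⊥ C‖ < ∞` holds (with `H` self-adjoint with
resolvents `R z = (H - z)⁻¹`, `P⊥` the projection onto the continuous spectral subspace,
commuting with `H`, and `C` injective bounded self-adjoint), then every special sequence
`(f_n, z_n)` for `H` associated to `(I', C)` — i.e. `Re z_n ∈ I'`, `0 ≠ Im z_n → 0`,
`P⊥ f_n = f_n`, `(H - z_n) f_n = C g_n ∈ D(C⁻¹)`, `‖g_n‖ → 0`, `‖C f_n‖ → η` —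
has mass `η = 0`. -/
theorem stmt_0 {ℋ : Type*} [NormedAddCommGroup ℋ] [InnerProductSpace ℂ ℋ] [CompleteSpace ℋ]
    (H : ℋ →ₗ.[ℂ] ℋ) (hH : IsSelfAdjoint H)
    (I' : Set ℝ) (s : ℝ) (hs : 0 ≤ s)
    -- the resolvent family of the self-adjoint operator `H`
    (R : ℂ → (ℋ →L[ℂ] ℋ))
    (hR_mem : ∀ z : ℂ, z.im ≠ 0 → ∀ u : ℋ, ∃ h : R z u ∈ H.domain,
        H ⟨R z u, h⟩ - z • R z u = u)
    (hR_inv : ∀ z : ℂ, z.im ≠ 0 → ∀ u : H.domain, R z (H u - z • (u : ℋ)) = u)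
    -- `P⊥`: orthogonal projection onto the continuous spectral subspace, commuting with `H`
    (Pperp : ℋ →L[ℂ] ℋ) (hPsa : IsSelfAdjoint Pperp)
    (hPidem : Pperp ∘L Pperp = Pperp)
    (hPR : ∀ z : ℂ, z.im ≠ 0 → Pperp ∘L R z = R z ∘L Pperp)
    -- `C`: injective bounded self-adjoint
    (C : ℋ →L[ℂ] ℋ) (hCsa : IsSelfAdjoint C) (hCinj : Function.Injective C)
    -- the reduced LAP on `(I', C)`
    (hLAP : ∃ M : ℝ, ∀ z : ℂ, z.re ∈ I' → z.im ≠ 0 →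
        ‖C ∘L R z ∘L Pperp ∘L C‖ ≤ M)
    -- a special sequence `(f_n, z_n)` for `H` associated to `(I', C)`, of mass `η`
    (f : ℕ → H.domain) (z : ℕ → ℂ) (g : ℕ → ℋ) (η : ℝ) (hη : 0 ≤ η)
    (hzre : ∀ n, (z n).re ∈ I') (hzim : ∀ n, (z n).im ≠ 0)
    (hzlim : Filter.Tendsto (fun n => (z n).im) Filter.atTop (𝓝 0))
    (hPf : ∀ n, Pperp (f n) = (f n : ℋ))
    (hg : ∀ n, C (g n) = H (f n) - z n • (f n : ℋ))
    (hglim : Filter.Tendsto (fun n => ‖g n‖) Filter.atTop (𝓝 0))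
    (hmass : Filter.Tendsto (fun n => ‖C (f n)‖) Filter.atTop (𝓝 η)) :
    η = 0 := by
  obtain ⟨M, hM⟩ := hLAP
  have key : ∀ n, ‖C (f n)‖ ≤ M * ‖g n‖ := by
    intro n
    have hf : R (z n) (C (g n)) = (f n : ℋ) := by
      rw [hg n]; exact hR_inv (z n) (hzim n) (f n)
    have : C ((f n : ℋ)) = (C ∘L R (z n) ∘L Pperp ∘L C) (g n) := by
      have hcomm : Pperp (R (z n) (C (g n))) = R (z n) (Pperp (C (g n))) := by
        have := congrFun (congrArg DFunLike.coe (hPR (z n) (hzim n))) (C (g n))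
        simpa using this
      simp only [ContinuousLinearMap.comp_apply]
      rw [← hcomm, hf, hPf n]
    rw [this]
    calc ‖(C ∘L R (z n) ∘L Pperp ∘L C) (g n)‖
        ≤ ‖C ∘L R (z n) ∘L Pperp ∘L C‖ * ‖g n‖ := (C ∘L R (z n) ∘L Pperp ∘L C).le_opNorm _
      _ ≤ M * ‖g n‖ :=
        mul_le_mul_of_nonneg_right (hM (z n) (hzre n) (hzim n)) (norm_nonneg _)
  have hlim : Filter.Tendsto (fun n => M * ‖g n‖) Filter.atTop (𝓝 0) := by
    simpa using hglim.const_mul M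
  have hle : η ≤ 0 :=
    le_of_tendsto_of_tendsto' hmass hlim key
  linarith
end

section
/- Energy estimate for the weighted Mourre inequality: let H be self-adjoint, P⊥ an orthogonal projection commuting with H, E the spectral projection of H onto an open interval I, and B', C bounded self-adjoint operators with C injective, σ ∈ {−1, +1} with σ B' ≥ 0, and C B' C⁻¹ bounded. Assume the strict weighted projected Mourre estimate P⊥ E [H, i B'] E P⊥ ≥ P⊥ E C² E P⊥ (as forms). Then for every u with E P⊥ u = u and (H - z) u in the range of C, where Re z ∈ I and −σ Im z > 0, one has ‖C u‖ ≤ 2 ‖C B' C⁻¹‖ · ‖C⁻¹ (H - z) u‖. -/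
open scoped InnerProductSpace ComplexOrder

/-!
The Mourre form `⟪u, [H, iB'] u⟫` equals `2 Im ⟪B' u, H u⟫`. Writing `H u = C w + z u`, the
`z u` part contributes `2 Im z ⟪B' u, u⟫`, which has the sign of `σ Im z < 0` because `σ B' ≥ 0`,
so it can be dropped. The remaining term is `2 Im ⟪B' u, C w⟫ = 2 Im ⟪C B' C⁻¹ (C u), w⟫`, which
Cauchy–Schwarz bounds by `2 ‖C B' C⁻¹‖ ‖C u‖ ‖w‖`; dividing by `‖C u‖` gives the estimate.
-/

section
variable {E : Type*} [NormedAddCommGroup E] [InnerProductSpace ℂ E]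

theorem re_I_mul_inner_sub_inner (x y : E) :
    (Complex.I * (⟪x, y⟫_ℂ - ⟪y, x⟫_ℂ)).re = 2 * (⟪y, x⟫_ℂ).im := by
  rw [← inner_conj_symm y x]
  simp only [Complex.mul_re, Complex.I_re, Complex.I_im, Complex.sub_im, Complex.conj_im]
  ring

theorem im_inner_smul_right_nonpos {B : E →L[ℂ] E} {σ : ℝ} {z : ℂ}
    (hpos : (σ • B).IsPositive) (hz : 0 < -σ * z.im) (u : E) :
    (⟪B u, z • u⟫_ℂ).im ≤ 0 := by
  have hσB : 0 ≤ (σ : ℂ) * ⟪B u, u⟫_ℂ := by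
    simpa [inner_smul_left] using hpos.inner_nonneg_left u
  obtain ⟨hre, him⟩ := Complex.le_def.mp hσB
  simp only [Complex.zero_re, Complex.zero_im, Complex.mul_re, Complex.mul_im,
    Complex.ofReal_re, Complex.ofReal_im, zero_mul, sub_zero, add_zero] at hre him
  have hσ : σ ≠ 0 := by rintro rfl; simp at hz
  have hbim : (⟪B u, u⟫_ℂ).im = 0 := by simpa [hσ] using him.symm
  rw [inner_smul_right, Complex.mul_im, hbim, mul_zero, zero_add]
  have hσ2 : 0 < σ ^ 2 := by positivity
  nlinarith [mul_nonneg hre hz.le]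

theorem im_inner_le_of_comp_eq [CompleteSpace E] {B B₁ C : E →L[ℂ] E} (hC : IsSelfAdjoint C)
    (hB₁ : ∀ x, B₁ (C x) = C (B x)) (u w : E) :
    (⟪B u, C w⟫_ℂ).im ≤ ‖B₁‖ * ‖C u‖ * ‖w‖ :=
  calc (⟪B u, C w⟫_ℂ).im ≤ ‖⟪B₁ (C u), w⟫_ℂ‖ := by
        have hsymm : ⟪C (B u), w⟫_ℂ = ⟪B u, C w⟫_ℂ := hC.isSymmetric (B u) w
        rw [← hsymm, ← hB₁]; exact Complex.im_le_norm _
    _ ≤ ‖B₁ (C u)‖ * ‖w‖ := norm_inner_le_norm _ _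
    _ ≤ ‖B₁‖ * ‖C u‖ * ‖w‖ := by gcongr; exact B₁.le_opNorm _

end

theorem stmt_3_general {ℋ : Type*} [NormedAddCommGroup ℋ] [InnerProductSpace ℂ ℋ] [CompleteSpace ℋ]
    (H : ℋ →ₗ.[ℂ] ℋ)
    (I : Set ℝ)
    -- `E = E_I(H)` and `P⊥`, commuting orthogonal projections commuting with `H`
    (E Pperp : ℋ →L[ℂ] ℋ)
    -- `B'`, `C` bounded self-adjoint, `C` injective
    (B' C : ℋ →L[ℂ] ℋ)
    (hCsa : IsSelfAdjoint C)
    -- `σ ∈ {-1, 1}` with `σ B' ≥ 0`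
    (σ : ℝ) (hpos : (σ • B').IsPositive)
    -- `C B' C⁻¹` extends to the bounded operator `B₁`
    (B₁ : ℋ →L[ℂ] ℋ) (hB₁ : ∀ x, B₁ (C x) = C (B' x))
    -- strict weighted projected Mourre estimate, as forms
    (hMourre : ∀ u : H.domain, E (Pperp u) = (u : ℋ) →
        ‖C u‖ ^ 2 ≤ (Complex.I * (⟪H u, B' u⟫_ℂ - ⟪B' u, H u⟫_ℂ)).re) :
    ∀ (u : H.domain) (z : ℂ) (w : ℋ), z.re ∈ I → 0 < -σ * z.im →
      E (Pperp u) = (u : ℋ) → C w = H u - z • (u : ℋ) →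
      ‖C u‖ ≤ 2 * ‖B₁‖ * ‖w‖ := by
  intro u z w _ hz hEPu hCw
  have hHu : H u = C w + z • (u : ℋ) := by rw [hCw, sub_add_cancel]
  have hsq : ‖C u‖ ^ 2 ≤ 2 * ‖B₁‖ * ‖w‖ * ‖C u‖ :=
    calc ‖C u‖ ^ 2 ≤ 2 * (⟪B' u, H u⟫_ℂ).im := by
          simpa only [re_I_mul_inner_sub_inner] using hMourre u hEPu
      _ = 2 * (⟪B' u, C w⟫_ℂ).im + 2 * (⟪B' u, z • (u : ℋ)⟫_ℂ).im := by
          rw [hHu, inner_add_right, Complex.add_im, mul_add]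
      _ ≤ 2 * (⟪B' u, C w⟫_ℂ).im := by
          linarith [im_inner_smul_right_nonpos hpos hz (u : ℋ)]
      _ ≤ 2 * ‖B₁‖ * ‖w‖ * ‖C u‖ := by
          linarith [im_inner_le_of_comp_eq hCsa hB₁ (u : ℋ) w]
  have hbound : 0 ≤ 2 * ‖B₁‖ * ‖w‖ := by positivity
  nlinarith

/-- energy estimate for the weighted Mourre inequality: let `H` be self-adjoint,
`P⊥` an orthogonal projection commuting with `H`, `E` the spectral projection of `H` onto an
open interval `I`, `B', C` bounded self-adjoint with `C` injective, `σ ∈ {-1,1}` with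
`σ B' ≥ 0`, and `C B' C⁻¹` bounded (extension `B₁`, `B₁ ∘ C = C ∘ B'`).  Under the strict
weighted projected Mourre estimate `P⊥ E [H, iB'] E P⊥ ≥ P⊥ E C² E P⊥` (as forms), for any
`u ∈ D(H)` with `E P⊥ u = u`, and `z` with `Re z ∈ I`, `-σ Im z > 0`, and `(H - z) u = C w`
in the range of `C`, one has `‖C u‖ ≤ 2 ‖C B' C⁻¹‖ ‖C⁻¹ (H - z) u‖`. -/
theorem stmt_3 {ℋ : Type*} [NormedAddCommGroup ℋ] [InnerProductSpace ℂ ℋ] [CompleteSpace ℋ]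
    (H : ℋ →ₗ.[ℂ] ℋ) (hH : IsSelfAdjoint H)
    (I : Set ℝ) (hI : IsOpen I)
    -- `E = E_I(H)` and `P⊥`, commuting orthogonal projections commuting with `H`
    (E Pperp : ℋ →L[ℂ] ℋ)
    (hEsa : IsSelfAdjoint E) (hEidem : E ∘L E = E)
    (hPsa : IsSelfAdjoint Pperp) (hPidem : Pperp ∘L Pperp = Pperp)
    (hEP : E ∘L Pperp = Pperp ∘L E)
    (hEH : ∀ u : H.domain, ∃ h : E u ∈ H.domain, H ⟨E u, h⟩ = E (H u))
    (hPH : ∀ u : H.domain, ∃ h : Pperp u ∈ H.domain, H ⟨Pperp u, h⟩ = Pperp (H u))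
    -- `B'`, `C` bounded self-adjoint, `C` injective
    (B' C : ℋ →L[ℂ] ℋ) (hBsa : IsSelfAdjoint B')
    (hCsa : IsSelfAdjoint C) (hCinj : Function.Injective C)
    -- `σ ∈ {-1, 1}` with `σ B' ≥ 0`
    (σ : ℝ) (hσ : σ = 1 ∨ σ = -1) (hpos : (σ • B').IsPositive)
    -- `C B' C⁻¹` extends to the bounded operator `B₁`
    (B₁ : ℋ →L[ℂ] ℋ) (hB₁ : ∀ x, B₁ (C x) = C (B' x))
    -- strict weighted projected Mourre estimate, as forms
    (hMourre : ∀ u : H.domain, E (Pperp u) = (u : ℋ) →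
        ‖C u‖ ^ 2 ≤ (Complex.I * (⟪H u, B' u⟫_ℂ - ⟪B' u, H u⟫_ℂ)).re) :
    ∀ (u : H.domain) (z : ℂ) (w : ℋ), z.re ∈ I → 0 < -σ * z.im →
      E (Pperp u) = (u : ℋ) → C w = H u - z • (u : ℋ) →
      ‖C u‖ ≤ 2 * ‖B₁‖ * ‖w‖ :=
  stmt_3_general H I E Pperp B' C hCsa σ hpos B₁ hB₁ hMourre
end

section
/- Let x, y ∈ ℝ^d such that the segment [x, y] does not contain 0. Define v(t) = (t x + (1−t) y)/|t x + (1−t) y| for t ∈ [0,1] and r(x,y) = ∫₀¹ ((1−t)·1_{[1/2,1]}(t) − t·1_{[0,1/2]}(t)) v'(t) dt. Then |x| − |y| = ⟨v(1/2) + r(x,y), x − y⟩ and |r(x,y)| ≤ 2. -/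
/-!
Integrating by parts on `[0, c]` and `[c, 1]` shows that the kernel integral equals
`∫₀¹ v - v c`, so `r = ∫₀¹ v - v (1/2)` and `v (1/2) + r = ∫₀¹ v`. Since `u t = ‖t • x + (1 - t) • y‖`
has derivative `⟪v t, x - y⟫`, the fundamental theorem of calculus gives
`‖x‖ - ‖y‖ = ⟪∫₀¹ v, x - y⟫`. Finally `‖v‖ ≤ 1` bounds both `‖∫₀¹ v‖` and `‖v (1/2)‖` by `1`.
-/

open Set MeasureTheory intervalIntegral
open scoped RealInnerProductSpace

section IntegrationByParts

variable {E : Type*} [NormedAddCommGroup E] [NormedSpace ℝ E] [CompleteSpace E]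
  {f f' : ℝ → E} {a b : ℝ}

theorem intervalIntegral.integral_const_sub_smul_deriv
    (hf : ∀ t ∈ uIcc a b, HasDerivAt f (f' t) t) (hf' : IntervalIntegrable f' volume a b) :
    ∫ t in a..b, (b - t) • f' t = (∫ t in a..b, f t) - (b - a) • f a := by
  rw [integral_smul_deriv_eq_deriv_smul (u := fun t => b - t) (u' := fun _ => -1)
    (fun t _ => (hasDerivAt_id' t).const_sub b) hf intervalIntegrable_const hf']
  simp only [sub_self, zero_smul, neg_smul, one_smul, integral_neg]
  abel

theorem intervalIntegral.integral_sub_const_smul_deriv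
    (hf : ∀ t ∈ uIcc a b, HasDerivAt f (f' t) t) (hf' : IntervalIntegrable f' volume a b) :
    ∫ t in a..b, (t - a) • f' t = (b - a) • f b - ∫ t in a..b, f t := by
  rw [integral_smul_deriv_eq_deriv_smul (u := fun t => t - a) (u' := fun _ => 1)
    (fun t _ => (hasDerivAt_id' t).sub_const a) hf intervalIntegrable_const hf']
  simp

theorem intervalIntegral.integral_indicator_sub_indicator_smul_deriv {c : ℝ}
    (hc : c ∈ Icc (0 : ℝ) 1)
    (hf : ∀ t ∈ Icc (0 : ℝ) 1, HasDerivAt f (f' t) t) (hf' : IntervalIntegrable f' volume 0 1) :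
    ∫ t in (0 : ℝ)..1,
        ((Icc c 1).indicator (fun s => 1 - s) t - (Icc 0 c).indicator (fun s => s) t) • f' t
      = (∫ t in (0 : ℝ)..1, f t) - f c := by
  set K : ℝ → E := fun t =>
    ((Icc c 1).indicator (fun s => 1 - s) t - (Icc 0 c).indicator (fun s => s) t) • f' t
  have hsub₁ : uIcc 0 c ⊆ Icc (0 : ℝ) 1 := by
    rw [uIcc_of_le hc.1]; exact Icc_subset_Icc_right hc.2
  have hsub₂ : uIcc c 1 ⊆ Icc (0 : ℝ) 1 := by
    rw [uIcc_of_le hc.2]; exact Icc_subset_Icc_left hc.1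
  have hf₁ : IntervalIntegrable f' volume 0 c :=
    hf'.mono_set (uIcc_of_le (zero_le_one' ℝ) ▸ hsub₁)
  have hf₂ : IntervalIntegrable f' volume c 1 :=
    hf'.mono_set (uIcc_of_le (zero_le_one' ℝ) ▸ hsub₂)
  have hfc : ContinuousOn f (Icc 0 1) := fun t ht => (hf t ht).continuousAt.continuousWithinAt
  have hK₁ : EqOn (fun t => -((t - 0) • f' t)) K (Ioo 0 c) := fun t ht => by
    simp [K, indicator_of_notMem (fun h : t ∈ Icc c 1 => ht.2.not_ge h.1),
      indicator_of_mem (Ioo_subset_Icc_self ht)]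
  have hK₂ : EqOn (fun t => (1 - t) • f' t) K (Ioo c 1) := fun t ht => by
    simp [K, indicator_of_notMem (fun h : t ∈ Icc 0 c => ht.1.not_ge h.2),
      indicator_of_mem (Ioo_subset_Icc_self ht)]
  have hint₁ : IntervalIntegrable (fun t => -((t - 0) • f' t)) volume 0 c :=
    (hf₁.continuousOn_smul (by fun_prop)).neg
  have hint₂ : IntervalIntegrable (fun t => (1 - t) • f' t) volume c 1 :=
    hf₂.continuousOn_smul (by fun_prop)
  rw [← integral_add_adjacent_intervals (hint₁.congr_uIoo (uIoo_of_le hc.1 ▸ hK₁))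
      (hint₂.congr_uIoo (uIoo_of_le hc.2 ▸ hK₂)),
    ← integral_congr_Ioo_of_le hc.1 hK₁, ← integral_congr_Ioo_of_le hc.2 hK₂, integral_neg,
    integral_sub_const_smul_deriv (fun t ht => hf t (hsub₁ ht)) hf₁,
    integral_const_sub_smul_deriv (fun t ht => hf t (hsub₂ ht)) hf₂,
    ← integral_add_adjacent_intervals ((hfc.mono hsub₁).intervalIntegrable)
      ((hfc.mono hsub₂).intervalIntegrable)]
  module

end IntegrationByParts

section NormalizedPath

variable {F : Type*} [NormedAddCommGroup F] [InnerProductSpace ℝ F] {w : ℝ → F}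

theorem HasDerivAt.norm_of_ne_zero {w' : F} {t : ℝ} (hw : HasDerivAt w w' t) (h0 : w t ≠ 0) :
    HasDerivAt (fun s => ‖w s‖) ⟪‖w t‖⁻¹ • w t, w'⟫ t := by
  have h := hw.norm_sq.sqrt (pow_ne_zero 2 (norm_ne_zero_iff.2 h0))
  simp only [Real.sqrt_sq (norm_nonneg _)] at h
  convert h using 1
  rw [real_inner_smul_left]
  field_simp

theorem ContDiff.contDiffOn_inv_norm_smul {n : WithTop ℕ∞} (hw : ContDiff ℝ n w) :
    ContDiffOn ℝ n (fun s => ‖w s‖⁻¹ • w s) {s | w s ≠ 0} :=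
  ((hw.contDiffOn.norm ℝ fun _ hs => hs).inv fun _ hs => norm_ne_zero_iff.2 hs).smul hw.contDiffOn

theorem norm_sub_norm_eq_inner_integral_inv_norm_smul [CompleteSpace F] {w' : F} {a b : ℝ}
    (hw : ∀ t ∈ uIcc a b, HasDerivAt w w' t) (h0 : ∀ t ∈ uIcc a b, w t ≠ 0) :
    ‖w b‖ - ‖w a‖ = ⟪∫ t in a..b, ‖w t‖⁻¹ • w t, w'⟫ := by
  have hcont : ContinuousOn (fun t => ‖w t‖⁻¹ • w t) (uIcc a b) := by
    have hwc : ContinuousOn w (uIcc a b) := fun t ht => (hw t ht).continuousAt.continuousWithinAt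
    exact (hwc.norm.inv₀ fun t ht => norm_ne_zero_iff.2 (h0 t ht)).smul hwc
  rw [← integral_eq_sub_of_hasDerivAt (fun t ht => (hw t ht).norm_of_ne_zero (h0 t ht))
    (hcont.inner continuousOn_const).intervalIntegrable]
  simp only [real_inner_comm w']
  exact (innerSL ℝ w').intervalIntegral_comp_comm (hcont.intervalIntegrable (μ := volume))

end NormalizedPath

theorem hasDerivAt_smul_add_one_sub_smul {E : Type*} [NormedAddCommGroup E] [NormedSpace ℝ E]
    (x y : E) (t : ℝ) : HasDerivAt (fun s : ℝ => s • x + (1 - s) • y) (x - y) t := by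
  convert ((hasDerivAt_id' t).smul_const x).fun_add (((hasDerivAt_id' t).const_sub 1).smul_const y)
    using 1
  simp [sub_eq_add_neg]

/-- Let `x, y ∈ ℝ^d` with `0` not on the segment `[x,y]`. With
`v(t) = (t•x + (1-t)•y)/‖t•x + (1-t)•y‖` and
`r = ∫₀¹ ((1-t)·1_{[1/2,1]}(t) - t·1_{[0,1/2]}(t)) • v'(t) dt`, one has
`‖x‖ - ‖y‖ = ⟪v(1/2) + r, x - y⟫` and `‖r‖ ≤ 2`. -/
theorem stmt_5 {d : ℕ} (x y : EuclideanSpace ℝ (Fin d))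
    (hseg : (0 : EuclideanSpace ℝ (Fin d)) ∉ segment ℝ x y)
    (v : ℝ → EuclideanSpace ℝ (Fin d))
    (hv : ∀ t : ℝ, v t = ‖t • x + (1 - t) • y‖⁻¹ • (t • x + (1 - t) • y))
    (r : EuclideanSpace ℝ (Fin d))
    (hr : r = ∫ t in (0:ℝ)..1,
        ((Set.Icc (1/2 : ℝ) 1).indicator (fun s => 1 - s) t
          - (Set.Icc (0 : ℝ) (1/2)).indicator (fun s => s) t) • deriv v t) :
    ‖x‖ - ‖y‖ = ⟪v (1/2) + r, x - y⟫ ∧ ‖r‖ ≤ 2 := by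
  set w : ℝ → EuclideanSpace ℝ (Fin d) := fun t => t • x + (1 - t) • y
  have hv_eq : v = fun t => ‖w t‖⁻¹ • w t := funext hv
  have hw : ∀ t, HasDerivAt w (x - y) t := hasDerivAt_smul_add_one_sub_smul x y
  have hw0 : ∀ t ∈ Icc (0 : ℝ) 1, w t ≠ 0 := fun t ht h =>
    hseg ⟨t, 1 - t, ht.1, sub_nonneg.2 ht.2, add_sub_cancel _ _, h⟩
  have hU : IsOpen {t | w t ≠ 0} := isOpen_ne_fun (by fun_prop) continuous_const
  have hvC : ContDiffOn ℝ 1 v {t | w t ≠ 0} :=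
    hv_eq ▸ (by fun_prop : ContDiff ℝ 1 w).contDiffOn_inv_norm_smul
  have hv' : ∀ t ∈ Icc (0 : ℝ) 1, HasDerivAt v (deriv v t) t := fun t ht =>
    ((hvC.differentiableOn one_ne_zero t (hw0 t ht)).differentiableAt
      (hU.mem_nhds (hw0 t ht))).hasDerivAt
  have hr' : r = (∫ t in (0 : ℝ)..1, v t) - v (1 / 2) :=
    hr.trans (integral_indicator_sub_indicator_smul_deriv (by norm_num) hv'
      (((hvC.continuousOn_deriv_of_isOpen hU le_rfl).mono hw0).intervalIntegrable_of_Icc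
        zero_le_one))
  have hnorm : ‖x‖ - ‖y‖ = ⟪∫ t in (0 : ℝ)..1, v t, x - y⟫ := by
    have h := norm_sub_norm_eq_inner_integral_inv_norm_smul (fun t _ => hw t)
      (fun t ht => hw0 t (by rwa [uIcc_of_le zero_le_one] at ht))
    rw [← hv_eq] at h
    simpa [w] using h
  have hv1 : ∀ t, ‖v t‖ ≤ 1 := fun t => by
    simpa [hv_eq] using inv_norm_smul_mem_unitClosedBall (w t)
  refine ⟨by rw [hr', add_sub_cancel, hnorm], ?_⟩
  calc ‖r‖ ≤ ‖∫ t in (0 : ℝ)..1, v t‖ + ‖v (1 / 2)‖ := hr' ▸ norm_sub_le _ _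
    _ ≤ 1 * |1 - 0| + 1 := add_le_add (norm_integral_le_of_norm_le_const fun t _ => hv1 t) (hv1 _)
    _ = 2 := by norm_num
end
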